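/- arXiv:1210.5386 — 5 statements merged into one kernel-verified Lean document; each statement's English description precedes it below -/
import Mathlib

section
/- For any fixed production plan x* ∈ ℝ^T, the maximum of the total cost F(x*, S) over the scenario box Γ is attained at an extreme scenario: there exists S ∈ Γ_ext = ∏_{t=1}^T {d⁻_t, d⁺_t} such that F(x*, S) = sup_{S' ∈ Γ} F(x*, S'). Consequently max_{S ∈ Γ} F(x*, S) = max_{S ∈ Γ_ext} F(x*, S). -/
/-- Cumulative sum up to period `t`. -/
noncomputable def cum {T : ℕ} (x : Fin T → ℝ) (t : Fin T) : ℝ :=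
  ∑ i ∈ Finset.Iic t, x i

/-- Total cost `F(x, S)` of production plan `x` under demand scenario `S`. -/
noncomputable def totalCost {T : ℕ} (cI cB : Fin T → ℝ) (x S : Fin T → ℝ) : ℝ :=
  ∑ t : Fin T, max (cI t * (cum x t - cum S t)) (cB t * (cum S t - cum x t))

/-- The scenario box `Γ = ∏_t [d⁻_t, d⁺_t]`. -/
def scenarioBox {T : ℕ} (dlo dhi : Fin T → ℝ) : Set (Fin T → ℝ) :=
  Set.univ.pi fun t => Set.Icc (dlo t) (dhi t)

/-- The set of extreme scenarios `Γ_ext = ∏_t {d⁻_t, d⁺_t}`. -/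
def extremeScenarios {T : ℕ} (dlo dhi : Fin T → ℝ) : Set (Fin T → ℝ) :=
  Set.univ.pi fun t => ({dlo t, dhi t} : Set ℝ)

open Set

/-! Each summand of `F(x, ·)` is a maximum of two affine functions of the cumulative demand
`D_t(S)`, which is linear in `S`, so `F(x, ·)` is convex. The box `Γ` is the convex hull of the
finite set `Γ_ext`, so by the maximum principle every value on `Γ` is dominated by a value on
`Γ_ext`, and the largest of the finitely many values on `Γ_ext` is the maximum over `Γ`. -/

theorem convexOn_finsetSum {𝕜 E β ι : Type*} [Semiring 𝕜] [PartialOrder 𝕜]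
    [AddCommMonoid E] [AddCommMonoid β] [PartialOrder β] [IsOrderedAddMonoid β]
    [SMul 𝕜 E] [Module 𝕜 β] {s : Set E} (hs : Convex 𝕜 s) (t : Finset ι) {f : ι → E → β}
    (hf : ∀ i ∈ t, ConvexOn 𝕜 s (f i)) : ConvexOn 𝕜 s fun x => ∑ i ∈ t, f i x := by
  classical
  induction t using Finset.induction with
  | empty => simpa using convexOn_const 0 hs
  | insert i t hi ih =>
    simp only [Finset.sum_insert hi]
    exact (hf i (Finset.mem_insert_self i t)).add
      (ih fun j hj => hf j (Finset.mem_insert_of_mem hj))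

theorem convexOn_max_mul_sub (p q c : ℝ) :
    ConvexOn ℝ univ fun u => max (p * (c - u)) (q * (u - c)) := by
  refine ConvexOn.sup ⟨convex_univ, ?_⟩ ⟨convex_univ, ?_⟩ <;>
  · intro u _ v _ a b _ _ hab
    obtain rfl := eq_sub_of_add_eq hab
    simp only [smul_eq_mul]
    exact le_of_eq (by ring)

def cumLinearMap {T : ℕ} (t : Fin T) : (Fin T → ℝ) →ₗ[ℝ] ℝ :=
  ∑ i ∈ Finset.Iic t, LinearMap.proj i

@[simp] theorem cumLinearMap_apply {T : ℕ} (t : Fin T) (S : Fin T → ℝ) :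
    cumLinearMap t S = cum S t := by
  simp [cumLinearMap, cum]

theorem convexOn_totalCost {T : ℕ} (cI cB x : Fin T → ℝ) :
    ConvexOn ℝ univ (totalCost cI cB x) :=
  convexOn_finsetSum convex_univ _ fun t _ => by
    simpa [Function.comp_def] using
      (convexOn_max_mul_sub (cI t) (cB t) (cum x t)).comp_linearMap (cumLinearMap t)

theorem ConvexOn.exists_vertex_forall_le {ι β : Type*} [Fintype ι]
    [AddCommGroup β] [LinearOrder β] [IsOrderedAddMonoid β]
    [Module ℝ β] [IsStrictOrderedModule ℝ β]
    {a b : ι → ℝ} (hab : a ≤ b) {f : (ι → ℝ) → β}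
    (hf : ConvexOn ℝ (univ.pi fun i => Icc (a i) (b i)) f) :
    ∃ v ∈ univ.pi (fun i => ({a i, b i} : Set ℝ)),
      ∀ S ∈ univ.pi (fun i => Icc (a i) (b i)), f S ≤ f v := by
  have hull : convexHull ℝ (univ.pi fun i => ({a i, b i} : Set ℝ)) =
      univ.pi fun i => Icc (a i) (b i) := by
    simp only [convexHull_pi, convexHull_pair, segment_eq_Icc (hab _)]
  obtain ⟨v, hv, hmax⟩ := exists_max_image _ f
    (Finite.pi fun i => toFinite ({a i, b i} : Set ℝ)) ⟨a, fun i _ => mem_insert _ _⟩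
  refine ⟨v, hv, fun S hS => ?_⟩
  rw [← hull] at hf hS
  obtain ⟨w, hw, hle⟩ := hf.exists_ge_of_mem_convexHull (subset_convexHull ℝ _) hS
  exact hle.trans (hmax w hw)

theorem stmt1_general {T : ℕ} (cI cB : Fin T → ℝ)
    (dlo dhi : Fin T → ℝ) (hdd : ∀ t, dlo t ≤ dhi t)
    (x : Fin T → ℝ) :
    (∃ S ∈ extremeScenarios dlo dhi,
      ∀ S' ∈ scenarioBox dlo dhi, totalCost cI cB x S' ≤ totalCost cI cB x S) ∧
    sSup (totalCost cI cB x '' scenarioBox dlo dhi) =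
      sSup (totalCost cI cB x '' extremeScenarios dlo dhi) := by
  obtain ⟨S, hS, hmax⟩ : ∃ S ∈ extremeScenarios dlo dhi,
      ∀ S' ∈ scenarioBox dlo dhi, totalCost cI cB x S' ≤ totalCost cI cB x S :=
    ((convexOn_totalCost cI cB x).subset (subset_univ _)
      (convex_pi fun t _ => convex_Icc (dlo t) (dhi t))).exists_vertex_forall_le hdd
  have hext : extremeScenarios dlo dhi ⊆ scenarioBox dlo dhi :=
    pi_mono fun t _ => pair_subset (left_mem_Icc.2 (hdd t)) (right_mem_Icc.2 (hdd t))
  refine ⟨⟨S, hS, hmax⟩, ?_⟩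
  rw [IsGreatest.csSup_eq ⟨mem_image_of_mem _ (hext hS), forall_mem_image.2 hmax⟩,
    IsGreatest.csSup_eq
      ⟨mem_image_of_mem _ hS, forall_mem_image.2 fun S' hS' => hmax S' (hext hS')⟩]

/-- for any fixed plan `x*`, the maximum of `F(x*, ·)` over the scenario
box `Γ` is attained at an extreme scenario; consequently the maximum over `Γ` equals
the maximum over `Γ_ext`. -/
theorem stmt1 {T : ℕ} (cI cB : Fin T → ℝ)
    (hcI : ∀ t, 0 ≤ cI t) (hcB : ∀ t, 0 ≤ cB t)
    (dlo dhi : Fin T → ℝ) (hd0 : ∀ t, 0 ≤ dlo t) (hdd : ∀ t, dlo t ≤ dhi t)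
    (x : Fin T → ℝ) :
    (∃ S ∈ extremeScenarios dlo dhi,
      ∀ S' ∈ scenarioBox dlo dhi, totalCost cI cB x S' ≤ totalCost cI cB x S) ∧
    sSup (totalCost cI cB x '' scenarioBox dlo dhi) =
      sSup (totalCost cI cB x '' extremeScenarios dlo dhi) :=
  stmt1_general cI cB dlo dhi hdd x
end

section
/- Suppose c^I_t = c^I ≥ 0 and c^B_t = c^B ≥ 0 for all t, with c^I + c^B > 0, and let x̂ be the plan with cumulative levels X̂_t = (c^B·D_t(S⁺) + c^I·D_t(S⁻))/(c^B + c^I). Then S⁻ and S⁺ are worst-case scenarios for x̂: for every scenario S ∈ Γ one has F(x̂, S) ≤ F(x̂, S⁻) = F(x̂, S⁺); equivalently the maximal cost A(x̂) = max_{S ∈ Γ} F(x̂, S) equals F(x̂, S⁻) = F(x̂, S⁺). -/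
noncomputable def totalCostU {T : ℕ} (cI cB : ℝ) (x S : Fin T → ℝ) : ℝ :=
  ∑ t : Fin T, max (cI * (cum x t - cum S t)) (cB * (cum S t - cum x t))

lemma cum_mono {T : ℕ} {u v : Fin T → ℝ} (h : ∀ i, u i ≤ v i) (t : Fin T) :
    cum u t ≤ cum v t :=
  Finset.sum_le_sum fun i _ => h i

def periodCost (cI cB X d : ℝ) : ℝ :=
  max (cI * (X - d)) (cB * (d - X))

lemma totalCostU_eq_sum_periodCost {T : ℕ} (cI cB : ℝ) (x S : Fin T → ℝ) :
    totalCostU cI cB x S = ∑ t, periodCost cI cB (cum x t) (cum S t) :=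
  rfl

section periodCost

variable {cI cB X a b d : ℝ}

lemma periodCost_le_max_of_mem_Icc (hcI : 0 ≤ cI) (hcB : 0 ≤ cB) (hd : d ∈ Set.Icc a b) :
    periodCost cI cB X d ≤ max (periodCost cI cB X a) (periodCost cI cB X b) :=
  max_le_max (le_trans (by nlinarith [hd.1]) (le_max_left _ _))
    (le_trans (by nlinarith [hd.2]) (le_max_right _ _))

lemma periodCost_left_eq_right_of_balanced (hcI : 0 ≤ cI) (hcB : 0 ≤ cB) (haX : a ≤ X)
    (hXb : X ≤ b) (hbal : cI * (X - a) = cB * (b - X)) :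
    periodCost cI cB X a = periodCost cI cB X b := by
  have hleft : periodCost cI cB X a = cI * (X - a) :=
    max_eq_left (by nlinarith)
  have hright : periodCost cI cB X b = cB * (b - X) :=
    max_eq_right (by nlinarith)
  rw [hleft, hright, hbal]

lemma periodCost_left_eq_right_of_eq_weightedMean (hcI : 0 ≤ cI) (hcB : 0 ≤ cB)
    (hc : 0 < cI + cB) (hab : a ≤ b) (hX : X = (cB * b + cI * a) / (cB + cI)) :
    periodCost cI cB X a = periodCost cI cB X b := by
  have hmean : (cB + cI) * X = cB * b + cI * a := by
    rw [hX, mul_div_cancel₀ _ (by linarith : cB + cI ≠ 0)]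
  apply periodCost_left_eq_right_of_balanced hcI hcB
  · nlinarith
  · nlinarith
  · linarith

end periodCost

theorem stmt3_general {T : ℕ} (cI cB : ℝ) (hcI : 0 ≤ cI) (hcB : 0 ≤ cB) (hc : 0 < cI + cB)
    (dlo dhi : Fin T → ℝ) (hdd : ∀ t, dlo t ≤ dhi t)
    (xhat : Fin T → ℝ)
    (hxhat : ∀ t, cum xhat t = (cB * cum dhi t + cI * cum dlo t) / (cB + cI)) :
    (∀ S ∈ scenarioBox dlo dhi, totalCostU cI cB xhat S ≤ totalCostU cI cB xhat dlo) ∧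
    totalCostU cI cB xhat dlo = totalCostU cI cB xhat dhi := by
  have hend : ∀ t, periodCost cI cB (cum xhat t) (cum dlo t) =
      periodCost cI cB (cum xhat t) (cum dhi t) := fun t =>
    periodCost_left_eq_right_of_eq_weightedMean hcI hcB hc (cum_mono hdd t) (hxhat t)
  simp only [totalCostU_eq_sum_periodCost]
  refine ⟨fun S hS => Finset.sum_le_sum fun t _ => ?_, Finset.sum_congr rfl fun t _ => hend t⟩
  have hSt : cum S t ∈ Set.Icc (cum dlo t) (cum dhi t) :=
    ⟨cum_mono (fun i => (hS i trivial).1) t, cum_mono (fun i => (hS i trivial).2) t⟩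
  calc periodCost cI cB (cum xhat t) (cum S t)
      ≤ max (periodCost cI cB (cum xhat t) (cum dlo t))
          (periodCost cI cB (cum xhat t) (cum dhi t)) :=
        periodCost_le_max_of_mem_Icc hcI hcB hSt
    _ = periodCost cI cB (cum xhat t) (cum dlo t) := by rw [hend t, max_self]

/-- with uniform costs, for the plan `x̂` with cumulative levels
`X̂_t = (c^B·D_t(S⁺) + c^I·D_t(S⁻))/(c^B + c^I)`, the scenarios `S⁻` and `S⁺` are
worst-case scenarios: `F(x̂, S) ≤ F(x̂, S⁻) = F(x̂, S⁺)` for every `S ∈ Γ`. -/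
theorem stmt3 {T : ℕ} (cI cB : ℝ) (hcI : 0 ≤ cI) (hcB : 0 ≤ cB) (hc : 0 < cI + cB)
    (dlo dhi : Fin T → ℝ) (hd0 : ∀ t, 0 ≤ dlo t) (hdd : ∀ t, dlo t ≤ dhi t)
    (xhat : Fin T → ℝ)
    (hxhat : ∀ t, cum xhat t = (cB * cum dhi t + cI * cum dlo t) / (cB + cI)) :
    (∀ S ∈ scenarioBox dlo dhi, totalCostU cI cB xhat S ≤ totalCostU cI cB xhat dlo) ∧
    totalCostU cI cB xhat dlo = totalCostU cI cB xhat dhi :=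
  stmt3_general cI cB hcI hcB hc dlo dhi hdd xhat hxhat
end

section
/- Suppose c^I_t = c^I ≥ 0 and c^B_t = c^B ≥ 0 for all t, with c^I + c^B > 0. The plan x̂ defined by X̂_t = (c^B·D_t(S⁺) + c^I·D_t(S⁻))/(c^B + c^I), x̂_1 = X̂_1, x̂_t = X̂_t − X̂_{t−1} (t ≥ 2), is an optimal robust production plan for problem ROB with no capacity limits: for every plan x with x_t ≥ 0 for all t, one has max_{S ∈ Γ} F(x, S) ≥ max_{S ∈ Γ} F(x̂, S). -/
lemma key1 (cI cB L H s : ℝ) (hcI : 0 ≤ cI) (hcB : 0 ≤ cB) (hc : 0 < cB + cI)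
    (hLs : L ≤ s) (hsH : s ≤ H) :
    max (cI * ((cB * H + cI * L) / (cB + cI) - s))
      (cB * (s - (cB * H + cI * L) / (cB + cI))) ≤ cI * cB * (H - L) / (cB + cI) := by
  have hne : cB + cI ≠ 0 := hc.ne'
  rw [max_le_iff]
  constructor
  · rw [le_div_iff₀ hc]
    have h1 : (cB * H + cI * L) / (cB + cI) * (cB + cI) = cB * H + cI * L :=
      div_mul_cancel₀ _ hne
    nlinarith [mul_nonneg hcI (sub_nonneg.2 hLs), mul_nonneg hcB (sub_nonneg.2 hLs)]
  · rw [le_div_iff₀ hc]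
    have h1 : (cB * H + cI * L) / (cB + cI) * (cB + cI) = cB * H + cI * L :=
      div_mul_cancel₀ _ hne
    nlinarith [mul_nonneg hcI (sub_nonneg.2 hsH), mul_nonneg hcB (sub_nonneg.2 hsH)]

/-- with uniform costs, the plan `x̂` with cumulative levels
`X̂_t = (c^B·D_t(S⁺) + c^I·D_t(S⁻))/(c^B + c^I)` is an optimal robust production plan
for problem ROB with no capacity limits: for every feasible plan `x` (i.e. `x_t ≥ 0`
for all `t`), `max_{S ∈ Γ} F(x, S) ≥ max_{S ∈ Γ} F(x̂, S)`. -/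
theorem stmt4 {T : ℕ} (cI cB : ℝ) (hcI : 0 ≤ cI) (hcB : 0 ≤ cB) (hc : 0 < cI + cB)
    (dlo dhi : Fin T → ℝ) (hd0 : ∀ t, 0 ≤ dlo t) (hdd : ∀ t, dlo t ≤ dhi t)
    (xhat : Fin T → ℝ)
    (hxhat : ∀ t, cum xhat t = (cB * cum dhi t + cI * cum dlo t) / (cB + cI)) :
    ∀ x : Fin T → ℝ, (∀ t, 0 ≤ x t) →
      sSup (totalCostU cI cB xhat '' scenarioBox dlo dhi) ≤
        sSup (totalCostU cI cB x '' scenarioBox dlo dhi) := by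
  intro x hx
  have hc' : 0 < cB + cI := by linarith
  have hne : cB + cI ≠ 0 := hc'.ne'
  set M : ℝ := ∑ t : Fin T, cI * cB * (cum dhi t - cum dlo t) / (cB + cI) with hM
  have hcum : ∀ t, cum dlo t ≤ cum dhi t := fun t =>
    Finset.sum_le_sum fun i _ => hdd i
  have hM0 : 0 ≤ M := Finset.sum_nonneg fun t _ => by
    have h := hcum t
    apply div_nonneg _ hc'.le
    exact mul_nonneg (mul_nonneg hcI hcB) (by linarith)
  -- Step A : sSup for xhat ≤ M
  have hA : sSup (totalCostU cI cB xhat '' scenarioBox dlo dhi) ≤ M := by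
    apply Real.sSup_le _ hM0
    rintro v ⟨S, hS, rfl⟩
    apply Finset.sum_le_sum
    intro t _
    have h1 : cum dlo t ≤ cum S t :=
      Finset.sum_le_sum fun i _ => (hS i (Set.mem_univ i)).1
    have h2 : cum S t ≤ cum dhi t :=
      Finset.sum_le_sum fun i _ => (hS i (Set.mem_univ i)).2
    rw [hxhat t]
    exact key1 cI cB (cum dlo t) (cum dhi t) (cum S t) hcI hcB hc' h1 h2
  refine hA.trans ?_
  -- Step B : M ≤ sSup for x
  have hmemH : dhi ∈ scenarioBox dlo dhi := fun t _ => ⟨hdd t, le_refl _⟩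
  have hmemL : dlo ∈ scenarioBox dlo dhi := fun t _ => ⟨le_refl _, hdd t⟩
  -- bounded above via compactness
  have hcomp : IsCompact (scenarioBox dlo dhi) :=
    isCompact_univ_pi fun t => isCompact_Icc
  have hcont : Continuous (totalCostU cI cB x) := by
    unfold totalCostU cum
    apply continuous_finset_sum
    intro t _
    apply Continuous.max
    · exact continuous_const.mul (continuous_const.sub (continuous_finset_sum _ fun i _ => continuous_apply i))
    · exact continuous_const.mul ((continuous_finset_sum _ fun i _ => continuous_apply i).sub continuous_const)
  have hbdd : BddAbove (totalCostU cI cB x '' scenarioBox dlo dhi) :=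
    (hcomp.image hcont).bddAbove
  set Fp := totalCostU cI cB x dhi with hFp
  set Fm := totalCostU cI cB x dlo with hFm
  have hFp' : ∑ t : Fin T, cB * (cum dhi t - cum x t) ≤ Fp :=
    Finset.sum_le_sum fun t _ => le_max_right _ _
  have hFm' : ∑ t : Fin T, cI * (cum x t - cum dlo t) ≤ Fm :=
    Finset.sum_le_sum fun t _ => le_max_left _ _
  have hMsum : (cB + cI) * M = ∑ t : Fin T, cI * cB * (cum dhi t - cum dlo t) := by
    rw [hM, Finset.mul_sum]
    exact Finset.sum_congr rfl fun t _ => by field_simp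
  have hcomb : (cB + cI) * M ≤ cI * Fp + cB * Fm := by
    have h1 : cI * (∑ t : Fin T, cB * (cum dhi t - cum x t)) ≤ cI * Fp :=
      mul_le_mul_of_nonneg_left hFp' hcI
    have h2 : cB * (∑ t : Fin T, cI * (cum x t - cum dlo t)) ≤ cB * Fm :=
      mul_le_mul_of_nonneg_left hFm' hcB
    have hsum : (cB + cI) * M =
        cI * (∑ t : Fin T, cB * (cum dhi t - cum x t)) +
        cB * (∑ t : Fin T, cI * (cum x t - cum dlo t)) := by
      rw [hMsum, Finset.mul_sum, Finset.mul_sum, ← Finset.sum_add_distrib]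
      exact Finset.sum_congr rfl fun t _ => by ring
    linarith
  have hmax : M ≤ max Fp Fm := by
    have h1 : cI * Fp ≤ cI * max Fp Fm := mul_le_mul_of_nonneg_left (le_max_left _ _) hcI
    have h2 : cB * Fm ≤ cB * max Fp Fm := mul_le_mul_of_nonneg_left (le_max_right _ _) hcB
    have : (cB + cI) * M ≤ (cB + cI) * max Fp Fm := by linarith [hcomb]
    exact le_of_mul_le_mul_left this hc'
  have hFpS : Fp ≤ sSup (totalCostU cI cB x '' scenarioBox dlo dhi) :=
    le_csSup hbdd ⟨dhi, hmemH, rfl⟩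
  have hFmS : Fm ≤ sSup (totalCostU cI cB x '' scenarioBox dlo dhi) :=
    le_csSup hbdd ⟨dlo, hmemL, rfl⟩
  exact hmax.trans (max_le hFpS hFmS)
end

section
/- Let π : ℝ^T → [0,1], let F(x,·) : ℝ^T → ℝ be continuous in S, let g ∈ ℝ, and suppose for each λ ∈ (0,1] that Γ^[λ] = {S : π(S) ≥ λ} is nonempty and compact. Define the possibility degree Π(f_x ≤ g) = sup{π(S) : S ∈ ℝ^T, F(x, S) ≤ g} (with sup ∅ = 0) and f⁻^[λ]_x = min_{S ∈ Γ^[λ]} F(x, S). Then Π(f_x ≤ g) = sup{λ ∈ (0,1] : f⁻^[λ]_x ≤ g} (with sup ∅ = 0). -/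
/-- let `π : ℝ^T → [0,1]` be a possibility distribution over scenarios,
`F(x,·)` (here `Fc`) a continuous cost function, `g` a threshold, and suppose every
λ-cut `Γ^[λ] = {S : π(S) ≥ λ}` (λ ∈ (0,1]) is nonempty and compact. Then the degree of
possibility `Π(f_x ≤ g) = sup{π(S) : F(x,S) ≤ g}` equals
`sup{λ ∈ (0,1] : f⁻^[λ]_x ≤ g}`, where `f⁻^[λ]_x = min_{S ∈ Γ^[λ]} F(x,S)`
(with the convention `sup ∅ = 0`). -/
theorem stmt13 {T : ℕ} (poss : (Fin T → ℝ) → ℝ)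
    (hposs : ∀ S, poss S ∈ Set.Icc (0 : ℝ) 1)
    (Fc : (Fin T → ℝ) → ℝ) (hFc : Continuous Fc) (g : ℝ)
    (hcut : ∀ l ∈ Set.Ioc (0 : ℝ) 1,
      ({S | l ≤ poss S} : Set (Fin T → ℝ)).Nonempty ∧
      IsCompact ({S | l ≤ poss S} : Set (Fin T → ℝ))) :
    sSup {v : ℝ | ∃ S : Fin T → ℝ, Fc S ≤ g ∧ poss S = v} =
      sSup {l : ℝ | l ∈ Set.Ioc (0 : ℝ) 1 ∧
        sInf (Fc '' {S : Fin T → ℝ | l ≤ poss S}) ≤ g} := by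
  set A : Set ℝ := {v : ℝ | ∃ S : Fin T → ℝ, Fc S ≤ g ∧ poss S = v} with hA
  set B : Set ℝ := {l : ℝ | l ∈ Set.Ioc (0 : ℝ) 1 ∧
      sInf (Fc '' {S : Fin T → ℝ | l ≤ poss S}) ≤ g} with hB
  -- every element of B is dominated by an element of A
  have hBA : ∀ l ∈ B, ∃ v ∈ A, l ≤ v := by
    intro l hl
    obtain ⟨hl1, hl2⟩ := hl
    obtain ⟨hne, hcpt⟩ := hcut l hl1
    obtain ⟨S, hS, hmin⟩ := hcpt.exists_isMinOn hne hFc.continuousOn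
    have himg : sInf (Fc '' {S : Fin T → ℝ | l ≤ poss S}) = Fc S := by
      apply le_antisymm
      · exact csInf_le (hcpt.image hFc).bddBelow ⟨S, hS, rfl⟩
      · refine le_csInf (hne.image _) ?_
        rintro _ ⟨S', hS', rfl⟩
        exact hmin hS'
    refine ⟨poss S, ⟨S, ?_, rfl⟩, hS⟩
    calc Fc S = sInf (Fc '' {S : Fin T → ℝ | l ≤ poss S}) := himg.symm
      _ ≤ g := hl2
  -- positive elements of A belong to B
  have hAB : ∀ v ∈ A, 0 < v → v ∈ B := by
    rintro v ⟨S, hFS, rfl⟩ hv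
    have hv1 : poss S ≤ 1 := (hposs S).2
    have hmem : poss S ∈ Set.Ioc (0 : ℝ) 1 := ⟨hv, hv1⟩
    obtain ⟨_, hcpt⟩ := hcut (poss S) hmem
    refine ⟨hmem, le_trans (csInf_le (hcpt.image hFc).bddBelow ⟨S, le_refl (poss S), rfl⟩) hFS⟩
  have hAub : BddAbove A := ⟨1, by rintro v ⟨S, _, rfl⟩; exact (hposs S).2⟩
  have hBub : BddAbove B := ⟨1, by rintro l ⟨hl, _⟩; exact hl.2⟩
  rcases Set.eq_empty_or_nonempty A with hAe | hAne
  · have hBe : B = ∅ := by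
      rw [Set.eq_empty_iff_forall_notMem]
      intro l hl
      obtain ⟨v, hv, _⟩ := hBA l hl
      rw [hAe] at hv
      exact hv
    rw [hAe, hBe]
  · have h0A : (0 : ℝ) ≤ sSup A := by
      obtain ⟨v, hv⟩ := hAne
      obtain ⟨S, _, hSv⟩ := id hv
      exact le_trans (hSv ▸ (hposs S).1) (le_csSup hAub hv)
    have h0B : (0 : ℝ) ≤ sSup B := by
      rcases Set.eq_empty_or_nonempty B with hBe | hBne
      · rw [hBe, Real.sSup_empty]
      · obtain ⟨l, hl⟩ := hBne
        exact le_trans hl.1.1.le (le_csSup hBub hl)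
    apply le_antisymm
    · refine csSup_le hAne ?_
      intro v hv
      rcases le_or_gt v 0 with h | h
      · exact le_trans h h0B
      · exact le_csSup hBub (hAB v hv h)
    · rcases Set.eq_empty_or_nonempty B with hBe | hBne
      · rw [hBe, Real.sSup_empty]; exact h0A
      · refine csSup_le hBne ?_
        intro l hl
        obtain ⟨v, hv, hlv⟩ := hBA l hl
        exact le_trans hlv (le_csSup hAub hv)
end

section
/- Let π : ℝ^T → [0,1], let F(x,·) : ℝ^T → ℝ be continuous in S, let g ∈ ℝ, and suppose for each λ ∈ (0,1] that Γ^[λ] = {S : π(S) ≥ λ} is nonempty and compact. Define the necessity degree N(f_x ≤ g) = 1 − sup{π(S) : S ∈ ℝ^T, F(x, S) > g} (with sup ∅ = 0) and f⁺^[λ]_x = max_{S ∈ Γ^[λ]} F(x, S). Then N(f_x ≤ g) = 1 − inf{λ ∈ (0,1] : f⁺^[λ]_x ≤ g} whenever the latter set is nonempty, and in the complementary case (where that set is empty) N(f_x ≤ g) = 1 − sup{π(S) : F(x,S) > g} = 0 and f⁺^[λ]_x > g for all λ ∈ (0,1). -/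
/-- The pessimistic bound `f⁺^[λ]_x`: the maximal cost over the λ-cut scenario set. -/
noncomputable def fplus {T : ℕ} (poss : (Fin T → ℝ) → ℝ) (Fc : (Fin T → ℝ) → ℝ)
    (l : ℝ) : ℝ :=
  sSup (Fc '' {S : Fin T → ℝ | l ≤ poss S})

lemma fplus_attained {T : ℕ} (poss : (Fin T → ℝ) → ℝ) (Fc : (Fin T → ℝ) → ℝ)
    (hFc : Continuous Fc) {l : ℝ}
    (hne : ({S | l ≤ poss S} : Set (Fin T → ℝ)).Nonempty)
    (hcpt : IsCompact ({S | l ≤ poss S} : Set (Fin T → ℝ))) :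
    ∃ S, l ≤ poss S ∧ Fc S = fplus poss Fc l := by
  obtain ⟨x, hx, hmax⟩ := hcpt.exists_isMaxOn hne hFc.continuousOn
  refine ⟨x, hx, ?_⟩
  have hgt : IsGreatest (Fc '' {S | l ≤ poss S}) (Fc x) :=
    ⟨⟨x, hx, rfl⟩, by rintro _ ⟨y, hy, rfl⟩; exact hmax hy⟩
  exact hgt.csSup_eq.symm

lemma le_fplus {T : ℕ} (poss : (Fin T → ℝ) → ℝ) (Fc : (Fin T → ℝ) → ℝ)
    (hFc : Continuous Fc) {l : ℝ}
    (hcpt : IsCompact ({S | l ≤ poss S} : Set (Fin T → ℝ)))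
    {S : Fin T → ℝ} (hS : l ≤ poss S) :
    Fc S ≤ fplus poss Fc l :=
  le_csSup (hcpt.image hFc).bddAbove ⟨S, hS, rfl⟩

/-- let `π : ℝ^T → [0,1]` be a possibility distribution over scenarios,
`F(x,·)` (here `Fc`) a continuous cost function, `g` a threshold, and suppose every
λ-cut `Γ^[λ] = {S : π(S) ≥ λ}` (λ ∈ (0,1]) is nonempty and compact. Let
`N(f_x ≤ g) = 1 − sup{π(S) : F(x,S) > g}` (with `sup ∅ = 0`). If the set
`{λ ∈ (0,1] : f⁺^[λ]_x ≤ g}` is nonempty then `N(f_x ≤ g) = 1 − inf` of this set; in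
the complementary case `N(f_x ≤ g) = 0` and `f⁺^[λ]_x > g` for all `λ ∈ (0,1)`. -/
theorem stmt14 {T : ℕ} (poss : (Fin T → ℝ) → ℝ)
    (hposs : ∀ S, poss S ∈ Set.Icc (0 : ℝ) 1)
    (Fc : (Fin T → ℝ) → ℝ) (hFc : Continuous Fc) (g : ℝ)
    (hcut : ∀ l ∈ Set.Ioc (0 : ℝ) 1,
      ({S | l ≤ poss S} : Set (Fin T → ℝ)).Nonempty ∧
      IsCompact ({S | l ≤ poss S} : Set (Fin T → ℝ))) :
    (({l : ℝ | l ∈ Set.Ioc (0 : ℝ) 1 ∧ fplus poss Fc l ≤ g}).Nonempty →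
      1 - sSup {v : ℝ | ∃ S : Fin T → ℝ, g < Fc S ∧ poss S = v} =
        1 - sInf {l : ℝ | l ∈ Set.Ioc (0 : ℝ) 1 ∧ fplus poss Fc l ≤ g}) ∧
    (({l : ℝ | l ∈ Set.Ioc (0 : ℝ) 1 ∧ fplus poss Fc l ≤ g}) = ∅ →
      1 - sSup {v : ℝ | ∃ S : Fin T → ℝ, g < Fc S ∧ poss S = v} = 0 ∧
      ∀ l ∈ Set.Ioo (0 : ℝ) 1, g < fplus poss Fc l) := by
  set A := {v : ℝ | ∃ S : Fin T → ℝ, g < Fc S ∧ poss S = v} with hA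
  set L := {l : ℝ | l ∈ Set.Ioc (0 : ℝ) 1 ∧ fplus poss Fc l ≤ g} with hL
  have hAnn : ∀ v ∈ A, 0 ≤ v := by rintro v ⟨S, _, rfl⟩; exact (hposs S).1
  have hAub : ∀ v ∈ A, v ≤ 1 := by rintro v ⟨S, _, rfl⟩; exact (hposs S).2
  have hAbdd : BddAbove A := ⟨1, hAub⟩
  constructor
  · rintro ⟨l0, hl0⟩
    have hkey : ∀ v ∈ A, ∀ l ∈ L, v ≤ l := by
      rintro v ⟨S, hgS, rfl⟩ l ⟨hlI, hlg⟩
      by_contra h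
      push_neg at h
      exact absurd (le_trans (le_fplus poss Fc hFc (hcut l hlI).2 h.le) hlg)
        (not_le.mpr hgS)
    have h1 : sSup A ≤ sInf L := by
      apply Real.sSup_le
      · intro v hv
        exact le_csInf ⟨l0, hl0⟩ (hkey v hv)
      · exact le_csInf ⟨l0, hl0⟩ (fun l hl => hl.1.1.le)
    have h2 : sInf L ≤ sSup A := by
      by_contra h
      push_neg at h
      set s := sSup A with hs
      have hs0 : 0 ≤ s := Real.sSup_nonneg hAnn
      set l := (s + sInf L) / 2 with hl
      have hsl : s < l := by simp [hl]; linarith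
      have hll : l < sInf L := by simp [hl]; linarith
      have hl0' : 0 < l := lt_of_le_of_lt hs0 hsl
      have hl1 : l ≤ 1 := le_trans hll.le
        (le_trans (csInf_le ⟨0, fun x hx => hx.1.1.le⟩ hl0) hl0.1.2)
      have hlnot : l ∉ L := fun hmem =>
        absurd (csInf_le ⟨0, fun x hx => hx.1.1.le⟩ hmem) (not_le.mpr hll)
      have hgl : g < fplus poss Fc l := by
        by_contra hgl
        exact hlnot ⟨⟨hl0', hl1⟩, not_lt.mp hgl⟩
      obtain ⟨S, hSl, hSf⟩ := fplus_attained poss Fc hFc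
        (hcut l ⟨hl0', hl1⟩).1 (hcut l ⟨hl0', hl1⟩).2
      have hSA : poss S ∈ A := ⟨S, hSf ▸ hgl, rfl⟩
      exact absurd (le_csSup hAbdd hSA) (not_le.mpr (lt_of_lt_of_le hsl hSl))
    rw [le_antisymm h1 h2]
  · intro hempty
    have hnot : ∀ l ∈ Set.Ioc (0 : ℝ) 1, g < fplus poss Fc l := by
      intro l hlI
      by_contra hgl
      exact (Set.eq_empty_iff_forall_notMem.mp hempty l) ⟨hlI, not_lt.mp hgl⟩
    have h1 : (1 : ℝ) ∈ Set.Ioc (0 : ℝ) 1 := ⟨one_pos, le_refl 1⟩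
    obtain ⟨S, hSl, hSf⟩ := fplus_attained poss Fc hFc (hcut 1 h1).1 (hcut 1 h1).2
    have hSA : poss S ∈ A := ⟨S, hSf ▸ hnot 1 h1, rfl⟩
    have hge : (1 : ℝ) ≤ sSup A := le_trans hSl (le_csSup hAbdd hSA)
    have hle : sSup A ≤ 1 := Real.sSup_le hAub zero_le_one
    refine ⟨by rw [le_antisymm hle hge]; ring, fun l hl => hnot l ⟨hl.1, hl.2.le⟩⟩
end
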